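/- Let N ≥ 2 and let E ⊆ {(i,j) : 1 ≤ j < i ≤ N} be the edge set of a DAG on nodes {1,…,N} in topological order, with parents P_i nonempty for every i ≥ 2, and edge weights θ ∈ ℝ^E. Let γ > 0 and define the recursion v₁ = 0, v_i = γ log( Σ_{j ∈ P_i} exp( (θ_{i,j} + v_j)/γ ) ) for i = 2,…,N. Then v_N = γ log( Σ_{Y ∈ 𝒴} exp( score(Y)/γ ) ), where 𝒴 is the (finite, nonempty) set of paths from node 1 to node N and score(Y) is the cumulated edge weight of Y. In other words, for entropic regularization the smoothed dynamic program DPΩ(θ) equals the smoothed linear program LPΩ(θ). -/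

import Mathlib

/-- The cumulated weight (score) of a path `l = [y₁, …, y_L]`:
`∑_{t=2}^L θ_{y_t, y_{t-1}}`. -/
noncomputable def pathScore {N : ℕ} (θ : Fin N → Fin N → ℝ) (l : List (Fin N)) : ℝ :=
  ((l.zip l.tail).map (fun p => θ p.2 p.1)).sum

def paths {N : ℕ} (adj : Fin N → Fin N → Prop) [DecidableRel adj]
    (hadj : ∀ i j : Fin N, adj i j → j < i) : Fin N → Finset (List (Fin N)) :=
  fun i =>
    if i.val = 0 then {[i]}
    else (Finset.univ.filter (fun j => adj i j)).attach.biUnion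
      (fun j => (paths adj hadj j.1).image (fun l => l ++ [i]))
termination_by i => i.val
decreasing_by { rename_i x j; exact hadj x j.1 (Finset.mem_filter.mp j.2).2 }

lemma chain_head_lt {N : ℕ} {adj : Fin N → Fin N → Prop}
    (hadj : ∀ i j : Fin N, adj i j → j < i) {x y z : Fin N} {t : List (Fin N)}
    (hz : (x :: y :: t).getLast? = some z)
    (h : (x :: y :: t).Chain' (fun a b => adj b a)) :
    x < z := by
  have h2 : (x :: y :: t).Chain' (· < ·) := h.imp (fun a b hab => hadj b a hab)
  have hp : (x :: y :: t).Pairwise (· < ·) := List.isChain_iff_pairwise.mp h2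
  have hm : z ∈ y :: t := by
    rw [List.getLast?_cons_cons] at hz
    obtain ⟨h', rfl⟩ := List.mem_getLast?_eq_getLast hz
    exact List.getLast_mem h'
  exact (List.pairwise_cons.mp hp).1 _ hm

lemma mem_paths {N : ℕ} (adj : Fin N → Fin N → Prop) [DecidableRel adj]
    (hadj : ∀ i j : Fin N, adj i j → j < i) (h0 : 0 < N) :
    ∀ (i : Fin N) (l : List (Fin N)), l ∈ paths adj hadj i ↔
      (l.head? = some ⟨0, h0⟩ ∧ l.getLast? = some i ∧ l.Chain' (fun a b => adj b a)) := by
  suffices H : ∀ (n : ℕ) (i : Fin N), i.val = n → ∀ l : List (Fin N),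
      (l ∈ paths adj hadj i ↔
        (l.head? = some ⟨0, h0⟩ ∧ l.getLast? = some i ∧ l.Chain' (fun a b => adj b a))) by
    exact fun i => H i.val i rfl
  intro n
  induction n using Nat.strong_induction_on with
  | _ n IH =>
    intro i hin l
    rw [paths]
    by_cases hi : i.val = 0
    · rw [if_pos hi]
      have hi' : i = ⟨0, h0⟩ := Fin.ext hi
      subst hi'
      rw [Finset.mem_singleton]
      constructor
      · rintro rfl; simp [List.Chain']
      · rintro ⟨hh, hl, hc⟩
        match l, hh with
        | [a], hh => simp_all
        | a :: b :: t, hh =>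
          exfalso
          have := chain_head_lt hadj hl hc
          have ha : a = ⟨0, h0⟩ := by simpa using hh
          rw [ha] at this
          exact lt_irrefl _ this
    · rw [if_neg hi]
      simp only [Finset.mem_biUnion, Finset.mem_attach, Finset.mem_image, true_and,
        Subtype.exists]
      constructor
      · rintro ⟨j, hj, l', hl', rfl⟩
        have hj' : adj i j := (Finset.mem_filter.mp hj).2
        obtain ⟨hh, hl, hc⟩ := (IH j.val (by rw [← hin]; exact hadj i j hj') j rfl l').mp hl'
        have hne : l' ≠ [] := by rintro rfl; simp at hh
        refine ⟨?_, ?_, ?_⟩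
        · rwa [List.head?_append_of_ne_nil _ hne]
        · simp
        · rw [List.Chain', List.isChain_append]
          refine ⟨hc, List.isChain_singleton _, ?_⟩
          intro x hx y hy
          simp only [List.head?_cons, Option.mem_def, Option.some.injEq] at hy
          rw [hl] at hx
          simp only [Option.mem_def, Option.some.injEq] at hx
          subst hx; subst hy; exact hj'
      · rintro ⟨hh, hl, hc⟩
        match l with
        | [] => simp at hh
        | [a] =>
          exfalso
          simp only [List.head?_cons, Option.some.injEq] at hh
          simp only [List.getLast?_singleton, Option.some.injEq] at hl
          exact hi (by rw [← hl, hh])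
        | a :: b :: t =>
          set L := a :: b :: t with hL
          have hne : L ≠ [] := by simp [hL]
          have hdec : L.dropLast ++ [L.getLast hne] = L := List.dropLast_append_getLast hne
          have hlast : L.getLast hne = i := by
            have := List.getLast?_eq_getLast hne
            rw [this] at hl; exact Option.some_injective _ hl
          have hdne : L.dropLast ≠ [] := by simp [hL]
          set j := L.dropLast.getLast hdne with hj
          have hcj : adj i j := by
            rw [← hdec, List.Chain', List.isChain_append] at hc
            have := hc.2.2 j (by rw [List.getLast?_eq_getLast hdne]; rfl) i (by rw [List.head?_cons, hlast]; exact rfl)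
            exact this
          have hjlt : j < i := hadj i j hcj
          refine ⟨j, Finset.mem_filter.mpr ⟨Finset.mem_univ _, hcj⟩, L.dropLast, ?_, ?_⟩
          · rw [IH j.val (by rw [← hin]; exact hjlt) j rfl]
            refine ⟨?_, by rw [List.getLast?_eq_getLast hdne], ?_⟩
            · rw [← hdec] at hh
              rwa [List.head?_append_of_ne_nil _ hdne] at hh
            · rw [← hdec, List.Chain', List.isChain_append] at hc
              exact hc.1
          · rw [← hlast]; exact hdec

lemma pathScore_cons {N : ℕ} (θ : Fin N → Fin N → ℝ) (a b : Fin N) (t : List (Fin N)) :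
    pathScore θ (a :: b :: t) = θ b a + pathScore θ (b :: t) := by
  simp [pathScore]

lemma pathScore_append {N : ℕ} (θ : Fin N → Fin N → ℝ) :
    ∀ (l : List (Fin N)) (h : l ≠ []) (i : Fin N),
      pathScore θ (l ++ [i]) = pathScore θ l + θ i (l.getLast h)
  | [a], _, i => by simp [pathScore]
  | a :: b :: t, _, i => by
    rw [List.cons_append, List.cons_append, pathScore_cons, ← List.cons_append,
      pathScore_append θ (b :: t) (by simp) i, pathScore_cons,
      List.getLast_cons (l := b :: t) (by simp)]
    ring


/-- with entropic regularization, the smoothed dynamic program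
equals the smoothed linear program: the log-sum-exp recursion
`v 0 = 0`, `v i = γ log ∑_{j ∈ P_i} exp((θ i j + v j)/γ)` yields
`v (N-1) = γ log ∑_{Y ∈ 𝒴} exp(score(Y)/γ)`, the sum running over the finite
set `P` of all paths from node `0` to node `N-1`. -/
theorem stmt15 (N : ℕ) (hN : 2 ≤ N)
    (adj : Fin N → Fin N → Prop) [DecidableRel adj]
    (hadj : ∀ i j : Fin N, adj i j → j < i)
    (hpar : ∀ i : Fin N, i ≠ ⟨0, by omega⟩ →
      (Finset.univ.filter (fun j => adj i j)).Nonempty)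
    (θ : Fin N → Fin N → ℝ) (γ : ℝ) (hγ : 0 < γ)
    (v : Fin N → ℝ)
    (hv0 : v ⟨0, by omega⟩ = 0)
    (hv : ∀ i : Fin N, i ≠ ⟨0, by omega⟩ →
      v i = γ * Real.log (∑ j ∈ Finset.univ.filter (fun j => adj i j),
        Real.exp ((θ i j + v j) / γ)))
    (P : Finset (List (Fin N)))
    (hP : ∀ l : List (Fin N), l ∈ P ↔
      (l.head? = some ⟨0, by omega⟩ ∧ l.getLast? = some ⟨N - 1, by omega⟩ ∧
        l.Chain' (fun a b => adj b a))) :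
    v ⟨N - 1, by omega⟩ = γ * Real.log (∑ l ∈ P, Real.exp (pathScore θ l / γ)) := by
  have h0 : 0 < N := by omega
  have key : ∀ (n : ℕ) (i : Fin N), i.val = n →
      Real.exp (v i / γ) = ∑ l ∈ paths adj hadj i, Real.exp (pathScore θ l / γ) := by
    intro n
    induction n using Nat.strong_induction_on with
    | _ n IH =>
      intro i hin
      by_cases hi : i = ⟨0, h0⟩
      · subst hi
        rw [hv0, paths, if_pos rfl]
        simp [pathScore]
      · rw [hv i hi]
        have hS : 0 < ∑ j ∈ Finset.univ.filter (fun j => adj i j),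
            Real.exp ((θ i j + v j) / γ) :=
          Finset.sum_pos (fun j _ => Real.exp_pos _) (hpar i hi)
        rw [mul_div_cancel_left₀ _ (ne_of_gt hγ), Real.exp_log hS]
        rw [paths, if_neg (fun h => hi (Fin.ext h))]
        have hdisj : (↑(Finset.univ.filter (fun j => adj i j)).attach :
            Set {x // x ∈ Finset.univ.filter (fun j => adj i j)}).PairwiseDisjoint
            (fun j => (paths adj hadj j.1).image (fun l => l ++ [i])) := by
          intro j1 _ j2 _ hne
          apply Finset.disjoint_left.mpr
          intro x h1 h2
          obtain ⟨l1, hl1, rfl⟩ := Finset.mem_image.mp h1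
          obtain ⟨l2, hl2, heq⟩ := Finset.mem_image.mp h2
          have : l2 = l1 := by
            have := heq
            simpa using List.append_inj_left' this rfl
          subst this
          have e1 := ((mem_paths adj hadj h0 j1.1 l2).mp hl1).2.1
          have e2 := ((mem_paths adj hadj h0 j2.1 l2).mp hl2).2.1
          exact hne (Subtype.ext (Option.some_injective _ (e1 ▸ e2 ▸ rfl)))
        rw [Finset.sum_biUnion hdisj]
        rw [Finset.sum_attach _ (fun j => ∑ l ∈ (paths adj hadj j).image (fun l => l ++ [i]),
          Real.exp (pathScore θ l / γ))]
        refine Finset.sum_congr rfl (fun j hj => ?_)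
        have hadjij : adj i j := (Finset.mem_filter.mp hj).2
        have hjlt : (j : ℕ) < n := by rw [← hin]; exact hadj i j hadjij
        rw [Finset.sum_image (fun l1 _ l2 _ h => by simpa using List.append_inj_left' h rfl)]
        have hterm : ∀ l ∈ paths adj hadj j, Real.exp (pathScore θ (l ++ [i]) / γ) =
            Real.exp (θ i j / γ) * Real.exp (pathScore θ l / γ) := by
          intro l hl
          obtain ⟨hh, hlast, hc⟩ := (mem_paths adj hadj h0 j l).mp hl
          have hne : l ≠ [] := by rintro rfl; simp at hh
          have hgl : l.getLast hne = j := by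
            rw [List.getLast?_eq_getLast hne] at hlast
            exact Option.some_injective _ hlast
          rw [pathScore_append θ l hne i, hgl, ← Real.exp_add, add_div]
          ring_nf
        rw [Finset.sum_congr rfl hterm, ← Finset.mul_sum, ← IH j.val hjlt j rfl,
          ← Real.exp_add, add_div]
  have hPeq : P = paths adj hadj ⟨N - 1, by omega⟩ := by
    apply Finset.ext
    intro l
    rw [hP, mem_paths adj hadj h0]
  have hkey := key (⟨N - 1, by omega⟩ : Fin N).val ⟨N - 1, by omega⟩ rfl
  rw [hPeq, ← hkey, Real.log_exp, mul_comm, div_mul_cancel₀ _ (ne_of_gt hγ)]
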